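/- Let F be an r-uniform hypergraph in which every hyperedge shares at least t vertices with some other hyperedge of F. Let k ≥ t and let H be a k-uniform hypergraph on n vertices (n ≥ k) such that H contains no Berge-F but adding any new k-set as a hyperedge creates a Berge-F. Then every k-set that is not a hyperedge of H intersects some hyperedge of H in at least t vertices; consequently |E(H)| ≥ C(n,k)/(1 + ∑_{a=1}^{k−t} C(k,k−a)C(n−k,a)) = Ω(n^t). -/

import Mathlib

/-!
For a non-edge `e`, a Berge copy of `F` in `H + e` must use `e`, say for `f₀ ∈ F`. The partner
`f₁` of `f₀` with `|f₀ ∩ f₁| ≥ t` is carried by an edge of `H` other than `e`, and both this edge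
and `e` contain the injective image of `f₀ ∩ f₁`. So every `k`-set meets an edge of `H` in at
least `t` vertices, while a fixed `k`-set `f` meets at most `∑_{a ≤ k-t} C(k, k-a) C(n-k, a)`
`k`-sets that well (`a` counts the vertices outside `f`).
-/

/-- A `k`-uniform hypergraph `H` (on vertex set `V`) contains a Berge copy of the
`r`-uniform hypergraph `F` (on vertex set `W`): there is an injective placement of the
vertices of `F` and an injective assignment of hyperedges of `H` to the hyperedges of
`F`, each containing the image of its assigned edge. -/
def BergeCopy {W V : Type*} [DecidableEq V]
    (F : Finset (Finset W)) (H : Finset (Finset V)) : Prop :=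
  ∃ ψ : W ↪ V, ∃ φ : {e // e ∈ F} → Finset V, Function.Injective φ ∧
    ∀ e : {e // e ∈ F}, φ e ∈ H ∧ ∀ w ∈ e.val, ψ w ∈ φ e

open Finset

section

variable {W V : Type*} [DecidableEq V]

lemma card_inter_le_card_inter_of_map_subset [DecidableEq W] (ψ : W ↪ V)
    {a b : Finset W} {A B : Finset V} (ha : a.map ψ ⊆ A) (hb : b.map ψ ⊆ B) :
    #(a ∩ b) ≤ #(A ∩ B) := by
  rw [← card_map ψ, map_inter]
  exact card_le_card (inter_subset_inter ha hb)

lemma BergeCopy.exists_card_inter_le_of_insert [DecidableEq W] {t : ℕ}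
    {F : Finset (Finset W)} (hshare : ∀ e ∈ F, ∃ f ∈ F, f ≠ e ∧ t ≤ #(e ∩ f))
    {H : Finset (Finset V)} (hfree : ¬ BergeCopy F H) {e : Finset V}
    (h : BergeCopy F (insert e H)) : ∃ f ∈ H, t ≤ #(e ∩ f) := by
  obtain ⟨ψ, φ, hinj, hφ⟩ := h
  obtain ⟨f₀, hf₀⟩ : ∃ f₀, φ f₀ = e := by
    by_contra! hne
    exact hfree ⟨ψ, φ, hinj, fun f ↦ ⟨(mem_insert.mp (hφ f).1).resolve_left (hne f), (hφ f).2⟩⟩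
  obtain ⟨f₁, hf₁F, hne, hcard⟩ := hshare f₀ f₀.2
  have hφf₁ : φ ⟨f₁, hf₁F⟩ ≠ e := fun h ↦
    hne (congrArg Subtype.val (hinj (h.trans hf₀.symm)))
  have hmap : ∀ f, Finset.map ψ f.1 ⊆ φ f := fun f ↦ by
    rintro _ hv
    obtain ⟨w, hw, rfl⟩ := mem_map.mp hv
    exact (hφ f).2 w hw
  refine ⟨φ ⟨f₁, hf₁F⟩, (mem_insert.mp (hφ _).1).resolve_left hφf₁, ?_⟩
  exact hcard.trans (card_inter_le_card_inter_of_map_subset ψ (hf₀ ▸ hmap f₀) (hmap ⟨f₁, hf₁F⟩))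

section Counting

variable [Fintype V]

lemma card_filter_card_sdiff_eq_le (f : Finset V) (k a : ℕ) :
    #{e ∈ powersetCard k univ | #(e \ f) = a} ≤ (#f).choose (k - a) * (#fᶜ).choose a := by
  rw [← card_powersetCard, ← card_powersetCard, ← card_product]
  refine card_le_card_of_injOn (fun e ↦ (e ∩ f, e \ f)) ?_ ?_
  · intro e he
    simp only [coe_filter, mem_powersetCard, subset_univ, true_and, Set.mem_ofPred_eq] at he
    have hsplit := card_inter_add_card_sdiff e f
    simp only [coe_product, Set.mem_prod, mem_coe, mem_powersetCard]
    exact ⟨⟨inter_subset_right, by omega⟩,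
      ⟨fun x hx ↦ mem_compl.mpr (mem_sdiff.mp hx).2, he.2⟩⟩
  · intro e₁ _ e₂ _ h
    simp only [Prod.mk.injEq] at h
    rw [← sdiff_union_inter e₁ f, ← sdiff_union_inter e₂ f, h.1, h.2]

lemma card_filter_le_card_inter_le (f : Finset V) (k t : ℕ) :
    #{e ∈ powersetCard k univ | t ≤ #(e ∩ f)} ≤
      ∑ a ∈ range (k - t + 1), (#f).choose (k - a) * (#fᶜ).choose a := by
  calc #{e ∈ powersetCard k univ | t ≤ #(e ∩ f)}
      ≤ #((range (k - t + 1)).biUnion fun a ↦ {e ∈ powersetCard k univ | #(e \ f) = a}) := by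
        refine card_le_card fun e he ↦ ?_
        simp only [mem_filter, mem_powersetCard, subset_univ, true_and] at he
        have hsplit := card_inter_add_card_sdiff e f
        simp only [mem_biUnion, mem_range, mem_filter, mem_powersetCard, subset_univ, true_and]
        exact ⟨#(e \ f), by omega, he.1, rfl⟩
    _ ≤ ∑ a ∈ range (k - t + 1), #{e ∈ powersetCard k univ | #(e \ f) = a} := card_biUnion_le
    _ ≤ _ := sum_le_sum fun a _ ↦ card_filter_card_sdiff_eq_le f k a

lemma sum_range_succ_eq_one_add_sum_Icc (k n m : ℕ) :
    ∑ a ∈ range (m + 1), k.choose (k - a) * n.choose a =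
      1 + ∑ a ∈ Icc 1 m, k.choose (k - a) * n.choose a := by
  rw [range_eq_Ico, sum_eq_sum_Ico_succ_bot m.succ_pos, Nat.succ_eq_add_one,
    Ico_add_one_right_eq_Icc]
  simp

lemma choose_le_card_mul_of_forall_exists_le_card_inter {k t : ℕ} {H : Finset (Finset V)}
    (hunif : ∀ f ∈ H, #f = k) (hcover : ∀ e : Finset V, #e = k → ∃ f ∈ H, t ≤ #(e ∩ f)) :
    (Fintype.card V).choose k ≤
      #H * (1 + ∑ a ∈ Icc 1 (k - t), k.choose (k - a) * (Fintype.card V - k).choose a) := by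
  rw [← sum_range_succ_eq_one_add_sum_Icc, ← card_univ, ← card_powersetCard]
  refine (card_le_card fun e he ↦ ?_).trans (card_biUnion_le_card_mul H
    (fun f ↦ {e ∈ powersetCard k univ | t ≤ #(e ∩ f)}) _ fun f hf ↦ ?_)
  · obtain ⟨f, hf, hft⟩ := hcover e (mem_powersetCard.mp he).2
    exact mem_biUnion.mpr ⟨f, hf, mem_filter.mpr ⟨he, hft⟩⟩
  · simpa only [card_compl, hunif f hf, card_univ] using card_filter_le_card_inter_le f k t

end Counting

end

theorem stmt_7_general {W V : Type*} [Fintype V] [DecidableEq W] [DecidableEq V]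
    (k t n : ℕ) (htk : t ≤ k)
    (hn : Fintype.card V = n)
    (F : Finset (Finset W))
    (hshare : ∀ e ∈ F, ∃ f ∈ F, f ≠ e ∧ t ≤ (e ∩ f).card)
    (H : Finset (Finset V)) (hunif : ∀ e ∈ H, e.card = k)
    (hfree : ¬ BergeCopy F H)
    (hsat : ∀ e : Finset V, e.card = k → e ∉ H → BergeCopy F (insert e H)) :
    (∀ e : Finset V, e.card = k → e ∉ H → ∃ f ∈ H, t ≤ (e ∩ f).card) ∧
    (n.choose k : ℝ) /
        (1 + (∑ a ∈ Finset.Icc 1 (k - t), k.choose (k - a) * (n - k).choose a : ℕ)) ≤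
      H.card := by
  have hnonedge : ∀ e : Finset V, e.card = k → e ∉ H → ∃ f ∈ H, t ≤ (e ∩ f).card :=
    fun e he heH ↦ (hsat e he heH).exists_card_inter_le_of_insert hshare hfree
  have hcover : ∀ e : Finset V, #e = k → ∃ f ∈ H, t ≤ #(e ∩ f) := fun e he ↦ by
    by_cases heH : e ∈ H
    · exact ⟨e, heH, by rwa [inter_self, he]⟩
    · exact hnonedge e he heH
  refine ⟨hnonedge, ?_⟩
  have hcount := choose_le_card_mul_of_forall_exists_le_card_inter hunif hcover
  rw [hn] at hcount
  rw [div_le_iff₀ (by positivity)]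
  exact_mod_cast hcount

/-- If every hyperedge of `F` shares at least `t` vertices with another hyperedge of `F`,
`k ≥ t`, and `H` is a Berge-`F`-saturated `k`-uniform hypergraph on `n` vertices, then
every non-edge `k`-set meets some hyperedge of `H` in at least `t` vertices, and
consequently `|E(H)| ≥ C(n,k)/(1 + ∑_{a=1}^{k-t} C(k,k-a) C(n-k,a))`. -/
theorem stmt_7 {W V : Type*} [Fintype W] [Fintype V] [DecidableEq W] [DecidableEq V]
    (r k t n : ℕ) (hrk : r < k) (htk : t ≤ k) (ht : 1 ≤ t)
    (hn : Fintype.card V = n) (hkn : k ≤ n)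
    (F : Finset (Finset W)) (hFunif : ∀ e ∈ F, e.card = r)
    (hshare : ∀ e ∈ F, ∃ f ∈ F, f ≠ e ∧ t ≤ (e ∩ f).card)
    (H : Finset (Finset V)) (hunif : ∀ e ∈ H, e.card = k)
    (hfree : ¬ BergeCopy F H)
    (hsat : ∀ e : Finset V, e.card = k → e ∉ H → BergeCopy F (insert e H)) :
    (∀ e : Finset V, e.card = k → e ∉ H → ∃ f ∈ H, t ≤ (e ∩ f).card) ∧
    (n.choose k : ℝ) /
        (1 + (∑ a ∈ Finset.Icc 1 (k - t), k.choose (k - a) * (n - k).choose a : ℕ)) ≤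
      H.card :=
  stmt_7_general k t n htk hn F hshare H hunif hfree hsat
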